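/- Let K ≥ 1 be a real number. For every r ∈ (0,1), the derivative of r ↦ log[ (K(2r−1) + (K+1)Δ(r) + 1) / (1−r) ] equals 1/((1−r) Δ(r)); i.e. this function is an antiderivative of 1/((1−r)Δ(r)) on (0,1). -/

import Mathlib

/-!
In the variable `s = 2r - 1` the gap satisfies `(K+1) Δ² = 1 + K s²`, so `Δ' = 2 K s / ((K+1) Δ)`
and the numerator `N = K s + (K+1) Δ + 1` has `N' = 2 K (Δ + s) / Δ`. The claimed derivative
`N'/N + 1/(1-r) = 1/((1-r) Δ)` then reduces to the polynomial identity
`N (1 - Δ) = K (Δ + s)(1 - s)`, which is `(K+1) Δ² = 1 + K s²` again. The argument of the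
logarithm stays positive because `(K+1) Δ ≥ 1 - K s`, whence `N ≥ 2`.
-/

/-- The spectral gap `Δ(r) = √(1 - 4 K r (1-r)/(K+1))` of the restricted Grover Hamiltonian. -/
noncomputable def groverGap (K r : ℝ) : ℝ :=
  Real.sqrt (1 - 4 * K * r * (1 - r) / (K + 1))

open Real

noncomputable def groverNumerator (K r : ℝ) : ℝ :=
  K * (2 * r - 1) + (K + 1) * groverGap K r + 1

section

variable {K : ℝ}

theorem groverGap_eq (hK : K + 1 ≠ 0) (r : ℝ) :
    groverGap K r = √((1 + K * (2 * r - 1) ^ 2) / (K + 1)) := by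
  unfold groverGap
  congr 1
  field_simp
  ring

theorem groverGap_radicand_pos (hK : 0 ≤ K) (r : ℝ) : 0 < (1 + K * (2 * r - 1) ^ 2) / (K + 1) := by
  positivity

theorem groverGap_pos (hK : 0 ≤ K) (r : ℝ) : 0 < groverGap K r := by
  rw [groverGap_eq (by linarith)]
  exact sqrt_pos.2 (groverGap_radicand_pos hK r)

theorem add_one_mul_groverGap_sq (hK : 0 ≤ K) (r : ℝ) :
    (K + 1) * groverGap K r ^ 2 = 1 + K * (2 * r - 1) ^ 2 := by
  rw [groverGap_eq (by linarith), sq_sqrt (groverGap_radicand_pos hK r).le]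
  field_simp

-- `((K+1) Δ)² - (1 - K s)² = K (1 + s)²`
theorem one_sub_le_add_one_mul_groverGap (hK : 0 ≤ K) (r : ℝ) :
    1 - K * (2 * r - 1) ≤ (K + 1) * groverGap K r := by
  have hsq := add_one_mul_groverGap_sq hK r
  refine abs_le_of_sq_le_sq' ?_ (by positivity [groverGap_pos hK r]) |>.2
  nlinarith [mul_nonneg hK (sq_nonneg (2 * r))]

theorem two_le_groverNumerator (hK : 0 ≤ K) (r : ℝ) : 2 ≤ groverNumerator K r := by
  unfold groverNumerator
  linarith [one_sub_le_add_one_mul_groverGap hK r]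

theorem hasDerivAt_groverGap (hK : 0 ≤ K) (r : ℝ) :
    HasDerivAt (groverGap K) (2 * K * (2 * r - 1) / ((K + 1) * groverGap K r)) r := by
  have hrad : HasDerivAt (fun x => 1 - 4 * K * x * (1 - x) / (K + 1))
      (4 * K * (2 * r - 1) / (K + 1)) r :=
    ((((hasDerivAt_id' r).const_mul (4 * K)).mul ((hasDerivAt_id' r).const_sub 1)).div_const
      (K + 1) |>.const_sub 1).congr_deriv (by ring)
  refine (hrad.sqrt (sqrt_pos.1 (groverGap_pos hK r)).ne').congr_deriv ?_
  change _ / (2 * groverGap K r) = _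
  have hΔ := (groverGap_pos hK r).ne'
  have hK1 : K + 1 ≠ 0 := by linarith
  field_simp
  ring

theorem hasDerivAt_groverNumerator (hK : 0 ≤ K) (r : ℝ) :
    HasDerivAt (groverNumerator K)
      (2 * K * (groverGap K r + (2 * r - 1)) / groverGap K r) r := by
  have hΔ := (groverGap_pos hK r).ne'
  refine (((((hasDerivAt_id' r).const_mul 2).sub_const 1).const_mul K).add
    ((hasDerivAt_groverGap hK r).const_mul (K + 1)) |>.add_const 1).congr_deriv ?_
  field_simp

theorem groverNumerator_mul_one_sub_groverGap (hK : 0 ≤ K) (r : ℝ) :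
    groverNumerator K r * (1 - groverGap K r) =
      2 * K * (groverGap K r + (2 * r - 1)) * (1 - r) := by
  unfold groverNumerator
  linear_combination -add_one_mul_groverGap_sq hK r

end

/-- on `(0,1)`, the function
`r ↦ log[(K(2r-1) + (K+1)Δ(r) + 1)/(1-r)]` is an antiderivative of `1/((1-r)Δ(r))`. -/
theorem grover_antiderivative (K : ℝ) (hK : 1 ≤ K) :
    ∀ r ∈ Set.Ioo (0 : ℝ) 1,
      HasDerivAt
        (fun r : ℝ => Real.log ((K * (2 * r - 1) + (K + 1) * groverGap K r + 1) / (1 - r)))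
        (1 / ((1 - r) * groverGap K r)) r := by
  rintro r ⟨-, hr1⟩
  have hK0 : 0 ≤ K := by linarith
  have h1r : 1 - r ≠ 0 := sub_ne_zero.2 hr1.ne'
  have hN : groverNumerator K r ≠ 0 := (two_pos.trans_le (two_le_groverNumerator hK0 r)).ne'
  have hΔ := (groverGap_pos hK0 r).ne'
  have hquot := (hasDerivAt_groverNumerator hK0 r).div ((hasDerivAt_id' r).const_sub 1) h1r
  refine (hquot.log (div_ne_zero hN h1r)).congr_deriv ?_
  simp only [Pi.div_apply]
  field_simp
  linear_combination -groverNumerator_mul_one_sub_groverGap hK0 r
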